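/- Let W ∈ ℝ^{m×l}, Y ∈ ℝ^{n×l} have orthonormal columns with W^T U = 0 and Y^T V = 0, and let D ∈ ℝ^{l×l} be an invertible diagonal matrix. Then X_+ := U Σ V^T + α W D Y^T has rank s + l for every α ≠ 0. -/

import Mathlib

/-!
Both terms of the update factor through the stacked bases: the matrix equals
`[U W] * diagonal (σ, α d) * [V Y]ᵀ`, and the orthogonality hypotheses make `[U W]` and `[V Y]`
have orthonormal columns. Multiplying by a matrix with a left inverse on the left, and by one
with a right inverse on the right, preserves rank, so the rank is that of an invertible
diagonal matrix of size `s + l`.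
-/

open Matrix

namespace Matrix

variable {R : Type*} {m n k k' : Type*}

theorem rank_mul_mul_of_mul_eq_one [CommRing R] [StrongRankCondition R] [Fintype m] [Fintype n]
    [Fintype k] [Fintype k'] [DecidableEq k] [DecidableEq k'] {A' : Matrix k m R} {A : Matrix m k R}
    {B : Matrix k' n R} {B' : Matrix n k' R} (hA : A' * A = 1) (hB : B * B' = 1)
    (M : Matrix k k' R) : (A * M * B).rank = M.rank := by
  refine le_antisymm ((rank_mul_le_left _ _).trans (rank_mul_le_right _ _)) ?_
  calc M.rank = (A' * (A * M * B) * B').rank := by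
        simp only [Matrix.mul_assoc, hB, Matrix.mul_one, ← Matrix.mul_assoc A', hA, Matrix.one_mul]
    _ ≤ (A * M * B).rank := (rank_mul_le_left _ _).trans (rank_mul_le_right _ _)

theorem transpose_fromCols_mul_fromCols_eq_one [CommRing R] [Fintype m] [DecidableEq k]
    [DecidableEq k']
    {U : Matrix m k R} {W : Matrix m k' R} (hU : Uᵀ * U = 1) (hW : Wᵀ * W = 1)
    (hWU : Wᵀ * U = 0) : (fromCols U W)ᵀ * fromCols U W = 1 := by
  have hUW : Uᵀ * W = 0 := by rw [← transpose_transpose (Uᵀ * W), transpose_mul,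
    transpose_transpose, hWU, transpose_zero]
  rw [transpose_fromCols, fromRows_mul_fromCols, hU, hW, hWU, hUW, fromBlocks_one]

theorem fromCols_mul_diagonal_mul_transpose_fromCols [CommRing R] [Fintype k] [Fintype k']
    [DecidableEq k] [DecidableEq k'] (U : Matrix m k R) (W : Matrix m k' R) (V : Matrix n k R)
    (Y : Matrix n k' R) (a : k → R) (b : k' → R) :
    fromCols U W * diagonal (Sum.elim a b) * (fromCols V Y)ᵀ =
      U * diagonal a * Vᵀ + W * diagonal b * Yᵀ := by
  rw [← fromBlocks_diagonal, fromCols_mul_fromBlocks, transpose_fromCols, fromCols_mul_fromRows]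
  simp only [Matrix.mul_zero, add_zero, zero_add]

theorem rank_diagonal_of_ne_zero [Field R] [Fintype m] [DecidableEq m] {w : m → R} (hw : ∀ i, w i ≠ 0) :
    (diagonal w).rank = Fintype.card m := by
  classical
  rw [rank_diagonal, Fintype.card_subtype, Finset.filter_true_of_mem fun i _ => hw i,
    Finset.card_univ]

end Matrix

theorem rank_increase_update (m n s l : ℕ)
    (U : Matrix (Fin m) (Fin s) ℝ) (V : Matrix (Fin n) (Fin s) ℝ)
    (hU : Uᵀ * U = 1) (hV : Vᵀ * V = 1)
    (W : Matrix (Fin m) (Fin l) ℝ) (Y : Matrix (Fin n) (Fin l) ℝ)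
    (hW : Wᵀ * W = 1) (hY : Yᵀ * Y = 1)
    (hWU : Wᵀ * U = 0) (hYV : Yᵀ * V = 0)
    (σ : Fin s → ℝ) (hσ : ∀ i, σ i ≠ 0)
    (d : Fin l → ℝ) (hd : ∀ i, d i ≠ 0)
    (α : ℝ) (hα : α ≠ 0) :
    (U * Matrix.diagonal σ * Vᵀ + α • (W * Matrix.diagonal d * Yᵀ)).rank = s + l := by
  have hfactor : U * diagonal σ * Vᵀ + α • (W * diagonal d * Yᵀ) =
      fromCols U W * diagonal (Sum.elim σ (α • d)) * (fromCols V Y)ᵀ := by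
    rw [fromCols_mul_diagonal_mul_transpose_fromCols, diagonal_smul, Matrix.mul_smul,
      Matrix.smul_mul]
  have hentries : ∀ i, Sum.elim σ (α • d) i ≠ 0 := by
    rintro (i | i)
    · exact hσ i
    · exact mul_ne_zero hα (hd i)
  rw [hfactor, rank_mul_mul_of_mul_eq_one (transpose_fromCols_mul_fromCols_eq_one hU hW hWU)
    (transpose_fromCols_mul_fromCols_eq_one hV hY hYV), rank_diagonal_of_ne_zero hentries,
    Fintype.card_sum, Fintype.card_fin, Fintype.card_fin]
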